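/- The emptiness problem for recognizable tree languages is decidable: given a deterministic bottom-up finite tree automaton M (with finite state set, finite ranked input alphabet, and all data given effectively), it is decidable whether L(M) = ∅. Indeed, where p is the number of states of M, L(M) is nonempty if and only if L(M) contains a tree of height less than p. -/
import Mathlib


/-- Trees over a ranked alphabet `σ`. -/
inductive RTree (σ : ℕ → Type) : Type
  | node {k : ℕ} (a : σ k) (ts : Fin k → RTree σ) : RTree σ

/-- The leaf tree for a rank-0 symbol. -/
def RTree.leaf {σ : ℕ → Type} (a : σ 0) : RTree σ := .node a Fin.elim0

/-- Deterministic bottom-up finite tree automaton (σ = ranked alphabet, Q = states). -/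
structure DBUA (σ : ℕ → Type) (Q : Type) where
  δ : ∀ k, σ k → (Fin k → Q) → Q
  F : Set Q

/-- The state reached after bottom-up processing of a tree. -/
def DBUA.run {σ : ℕ → Type} {Q : Type} (M : DBUA σ Q) : RTree σ → Q
  | .node a ts => M.δ _ a fun i => M.run (ts i)

/-- The tree language recognized by a deterministic bottom-up fta. -/
def DBUA.lang {σ : ℕ → Type} {Q : Type} (M : DBUA σ Q) : Set (RTree σ) :=
  {t | M.run t ∈ M.F}

/-- A tree language is recognizable if it is recognized by some deterministic
bottom-up finite tree automaton (with finitely many states). -/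
def Recognizable {σ : ℕ → Type} (L : Set (RTree σ)) : Prop :=
  ∃ (Q : Type) (_ : Fintype Q) (M : DBUA σ Q), L = M.lang

/-- The height of a tree: 0 for leaves, `1 + max` of the childrens' heights
otherwise. -/
def height {σ : ℕ → Type} : RTree σ → ℕ
  | .node _ ts => Finset.univ.sup fun i => height (ts i) + 1


/-- States reachable by trees of height `< n`. -/
def DBUA.reach {σ : ℕ → Type} {Q : Type} (M : DBUA σ Q) (n : ℕ) : Set Q :=
  {q | ∃ t, M.run t = q ∧ height t < n}

lemma DBUA.reach_mono {σ : ℕ → Type} {Q : Type} (M : DBUA σ Q) {m n : ℕ}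
    (h : m ≤ n) : M.reach m ⊆ M.reach n := by
  rintro q ⟨t, ht, hh⟩; exact ⟨t, ht, hh.trans_le h⟩

lemma DBUA.reach_step {σ : ℕ → Type} {Q : Type} (M : DBUA σ Q) {n : ℕ}
    (h : M.reach (n + 1) = M.reach n) : M.reach (n + 2) = M.reach (n + 1) := by
  classical
  apply Set.Subset.antisymm _ (M.reach_mono (by omega))
  rintro q ⟨t, ht, hh⟩
  cases t with
  | @node k a ts =>
  have hts : ∀ i, M.run (ts i) ∈ M.reach n := by
    intro i
    rw [← h]
    refine ⟨ts i, rfl, ?_⟩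
    have : height (ts i) + 1 ≤ height (RTree.node a ts) := by
      simp only [height]
      exact Finset.le_sup (f := fun j => height (ts j) + 1) (Finset.mem_univ i)
    omega
  choose ts' hts' hh' using hts
  refine ⟨RTree.node a ts', ?_, ?_⟩
  · simp only [DBUA.run] at ht ⊢
    rw [show (fun i => M.run (ts' i)) = fun i => M.run (ts i) from funext hts']
    exact ht
  · simp only [height]
    have : (Finset.univ.sup fun i => height (ts' i) + 1) ≤ n := by
      apply Finset.sup_le; intro i _; exact hh' i
    omega

lemma DBUA.reach_stable {σ : ℕ → Type} {Q : Type} (M : DBUA σ Q) {n : ℕ}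
    (h : M.reach (n + 1) = M.reach n) :
    ∀ j, M.reach (n + j) = M.reach n := by
  have aux : ∀ j, M.reach (n + j + 1) = M.reach (n + j) := by
    intro j
    induction j with
    | zero => exact h
    | succ j ih => exact M.reach_step ih
  intro j
  induction j with
  | zero => rfl
  | succ j ih => exact (aux j).trans ih

/-- Theorem 3.74: the emptiness problem for recognizable tree languages is
decidable: for a deterministic bottom-up finite tree automaton `M` over a finite
ranked alphabet, with `p` its number of states, `L(M)` is nonempty iff it contains
a tree of height less than `p` (so emptiness is decided by inspecting the finitely
many trees of height `< p`). -/
theorem emptiness_decidable {σ : ℕ → Type} [∀ k, Fintype (σ k)]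
    (hσ : ∃ n, ∀ k, n ≤ k → IsEmpty (σ k))
    {Q : Type} [Fintype Q] (M : DBUA σ Q) :
    M.lang.Nonempty ↔ ∃ t ∈ M.lang, height t < Fintype.card Q := by
  classical
  set p := Fintype.card Q with hp
  constructor
  · rintro ⟨t, ht⟩
    -- key: reach (p+1) = reach p
    have key : M.reach (p + 1) = M.reach p := by
      by_contra hne
      -- then reach m ⊊ reach (m+1) for all m ≤ p
      have hstrict : ∀ m, m ≤ p → M.reach m ⊂ M.reach (m + 1) := by
        intro m hm
        refine ⟨M.reach_mono (by omega), fun hsub => ?_⟩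
        have heq : M.reach (m + 1) = M.reach m :=
          Set.Subset.antisymm hsub (M.reach_mono (by omega))
        apply hne
        have h1 := M.reach_stable heq (p - m)
        have h2 := M.reach_stable heq (p + 1 - m)
        rw [show m + (p - m) = p by omega] at h1
        rw [show m + (p + 1 - m) = p + 1 by omega] at h2
        rw [h1, h2]
      have hcard : ∀ m, m ≤ p + 1 → m ≤ (M.reach m).ncard := by
        intro m
        induction m with
        | zero => intro _; exact Nat.zero_le _
        | succ m ih =>
          intro hm
          have h1 := ih (by omega)
          have h2 := Set.ncard_lt_ncard (hstrict m (by omega)) (Set.toFinite _)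
          omega
      have := hcard (p + 1) le_rfl
      have hle : (M.reach (p + 1)).ncard ≤ p := by
        have := Set.ncard_le_ncard (Set.subset_univ (M.reach (p + 1)))
          (Set.finite_univ)
        rwa [Set.ncard_univ, Nat.card_eq_fintype_card] at this
      omega
    have hmem : M.run t ∈ M.reach (p + (height t + 1)) :=
      M.reach_mono (m := height t + 1) (by omega) ⟨t, rfl, by omega⟩
    rw [M.reach_stable key (height t + 1)] at hmem
    obtain ⟨t', ht', hh'⟩ := hmem
    exact ⟨t', by simpa [DBUA.lang, ht'] using ht, hh'⟩
  · rintro ⟨t, ht, _⟩; exact ⟨t, ht⟩
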